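/- arXiv:math/0511374 — 2 statements merged into one kernel-verified Lean document; each statement's English description precedes it below -/
import Mathlib

section
/- For each subset X of {1,...,n}, the map ρ_X : K_n → K sending w to 1 if the content of w is contained in X and to 0 otherwise is a monoid homomorphism into the multiplicative monoid of a field K; the ρ_X for distinct subsets X are pairwise distinct, giving 2^n pairwise non-equivalent one-dimensional representations of K_n. -/
/-- The defining relations of the Kiselman semigroup `K_n`:
`aᵢ² = aᵢ`, and `aᵢaⱼaᵢ = aⱼaᵢaⱼ = aⱼaᵢ` for `i < j`. -/
inductive KisRel (n : ℕ) : FreeMonoid (Fin n) → FreeMonoid (Fin n) → Prop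
  | idem (i : Fin n) : KisRel n (.of i * .of i) (.of i)
  | braid₁ {i j : Fin n} (h : i < j) :
      KisRel n (.of i * .of j * .of i) (.of j * .of i)
  | braid₂ {i j : Fin n} (h : i < j) :
      KisRel n (.of j * .of i * .of j) (.of j * .of i)

/-- The Kiselman semigroup (monoid) `K_n`. -/
abbrev Kiselman (n : ℕ) := PresentedMonoid (KisRel n)

/-- The canonical projection from the free monoid on the generators to `K_n`. -/
def kmk (n : ℕ) : FreeMonoid (Fin n) →* Kiselman n := PresentedMonoid.mk (KisRel n)

/-- The generator `a_{i+1}` (0-indexed: `ka i` is the paper's `a_{i+1}`). -/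
def ka {n : ℕ} (i : Fin n) : Kiselman n := PresentedMonoid.of (KisRel n) i

/-- The idempotent `e_X`: the product of the generators indexed by `X` in strictly
decreasing order of indices. -/
def eX {n : ℕ} (X : Finset (Fin n)) : Kiselman n :=
  kmk n (FreeMonoid.ofList ((X.sort (· ≤ ·)).reverse))

/-- The one-dimensional representation `ρ_X` of `K_n` over a field `K`, defined via the
content map `c`. -/
def rho {n : ℕ} (K : Type*) [Field K] (c : Kiselman n → Finset (Fin n))
    (X : Finset (Fin n)) (x : Kiselman n) : K :=
  if c x ⊆ X then 1 else 0

/-- Proposition 41: each `ρ_X` is a monoid homomorphism `K_n → K` (into the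
multiplicative monoid of the field `K`), and the `ρ_X` for distinct `X` are distinct,
giving `2^n` pairwise non-equivalent one-dimensional representations. -/
theorem kiselman_irreducible_representations (n : ℕ) (K : Type*) [Field K]
    (c : Kiselman n → Finset (Fin n))
    (hc : ∀ w : FreeMonoid (Fin n), c (kmk n w) = w.toList.toFinset) :
    (∀ X : Finset (Fin n), rho K c X 1 = 1 ∧
      ∀ x y : Kiselman n, rho K c X (x * y) = rho K c X x * rho K c X y) ∧
    (∀ X Y : Finset (Fin n), X ≠ Y → rho K c X ≠ rho K c Y) ∧
    Nat.card (Finset (Fin n)) = 2 ^ n := by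
  have hkey : ∀ x y : Kiselman n, c (x * y) = c x ∪ c y := by
    intro x y
    obtain ⟨u, rfl⟩ := Quot.exists_rep x
    obtain ⟨v, rfl⟩ := Quot.exists_rep y
    have hu : Quot.mk _ u = kmk n u := rfl
    have hv : Quot.mk _ v = kmk n v := rfl
    rw [hu, hv, ← map_mul, hc, hc, hc]
    show (u.toList ++ v.toList).toFinset = _
    simp
  have h1 : c 1 = ∅ := by
    have : (1 : Kiselman n) = kmk n 1 := by simp
    rw [this, hc]; rfl
  have hgen : ∀ i : Fin n, c (ka i) = {i} := by
    intro i
    have : ka i = kmk n (FreeMonoid.of i) := rfl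
    rw [this, hc]
    rfl
  refine ⟨?_, ?_, ?_⟩
  · intro X
    constructor
    · simp [rho, h1]
    · intro x y
      simp only [rho, hkey, Finset.union_subset_iff]
      by_cases hx : c x ⊆ X <;> by_cases hy : c y ⊆ X <;> simp [hx, hy]
  · intro X Y hXY hfun
    obtain ⟨i, hi⟩ := Finset.symmDiff_nonempty.mpr hXY
    rw [Finset.mem_symmDiff] at hi
    have := congrFun hfun (ka i)
    rcases hi with ⟨h1', h2'⟩ | ⟨h1', h2'⟩ <;>
      simp [rho, hgen, Finset.singleton_subset_iff, h1', h2'] at this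
  · simp [Nat.card_eq_fintype_card]
end

section
/- For X ⊆ {1,...,n} with X = {i_1 > ... > i_s} and complement {j_1 < ... < j_t}, define e_X^{(n)} = a_{i_1}···a_{i_s}(e − a_{j_1})···(e − a_{j_t}) in the semigroup algebra K[K_n]. Then the elements e_X^{(n)} are pairwise orthogonal idempotents (e_X^{(n)} e_Y^{(n)} = 0 for X ≠ Y, and (e_X^{(n)})^2 = e_X^{(n)}) and their sum over all subsets X equals the identity e. -/
/-- The element `e_X^{(n)} = a_{i₁}⋯a_{i_s}(e - a_{j₁})⋯(e - a_{j_t})` of the monoid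
algebra `K[K_n]`, where `X = {i₁ > … > i_s}` and the complement is `{j₁ < … < j_t}`. -/
noncomputable def EXA (n : ℕ) (K : Type*) [Field K] (X : Finset (Fin n)) :
    MonoidAlgebra K (Kiselman n) :=
  MonoidAlgebra.of K (Kiselman n) (eX X) *
    ((Xᶜ.sort (· ≤ ·)).map fun j =>
      (1 : MonoidAlgebra K (Kiselman n)) - MonoidAlgebra.of K (Kiselman n) (ka j)).prod


/-! Adjoin the generators in increasing order: adding the largest index `t` splits each `e_X`
into `aₜ e_X` and `e_X (1 - aₜ)`. Every `x` built from the `aᵢ` with `i < t` satisfies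
`aₜ x aₜ = aₜ x`, since the elements with this property form a subring, which contains these `aᵢ`
by the relation `aₜ aᵢ aₜ = aₜ aᵢ`. That identity is all it takes for the split family to be
again a complete family of orthogonal idempotents. -/

namespace Finset

variable {ι : Type*}

theorem sort_insert_of_forall_le [LinearOrder ι] {t : ι} {s : Finset ι} (hs : ∀ i ∈ s, i ≤ t)
    (ht : t ∉ s) : (insert t s).sort (· ≤ ·) = s.sort (· ≤ ·) ++ [t] := by
  have hnodup : (s.sort (· ≤ ·) ++ [t]).Nodup :=
    List.nodup_append.2 ⟨sort_nodup _ _, List.nodup_singleton t, by simpa using ht⟩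
  have htoFinset : (s.sort (· ≤ ·) ++ [t]).toFinset = insert t s := by
    ext; simp
  rw [← htoFinset, List.toFinset_sort _ hnodup]
  exact List.pairwise_append.2 ⟨pairwise_sort _ _, List.pairwise_singleton _ _,
    fun i hi j hj => by simpa [List.mem_singleton.1 hj] using hs i ((mem_sort _).1 hi)⟩

def powersetInsertEquiv [DecidableEq ι] {t : ι} {s : Finset ι} (ht : t ∉ s) :
    s.powerset ⊕ s.powerset ≃ (insert t s).powerset where
  toFun := Sum.elim
    (fun X => ⟨insert t X, mem_powerset.2 (insert_subset_insert t (mem_powerset.1 X.2))⟩)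
    (fun X => ⟨X, mem_powerset.2 ((mem_powerset.1 X.2).trans (subset_insert t s))⟩)
  invFun X :=
    if h : t ∈ X.1 then
      .inl ⟨X.1.erase t, mem_powerset.2 fun i hi => by
        simpa [(mem_erase.1 hi).1] using mem_powerset.1 X.2 (mem_of_mem_erase hi)⟩
    else
      .inr ⟨X.1, mem_powerset.2 ((subset_insert_iff_of_notMem h).1 (mem_powerset.1 X.2))⟩
  left_inv := by
    rintro (⟨X, hX⟩ | ⟨X, hX⟩)
    · have htX : t ∉ X := fun h => ht (mem_powerset.1 hX h)
      simp [erase_insert htX]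
    · have htX : t ∉ X := fun h => ht (mem_powerset.1 hX h)
      simp [htX]
  right_inv := by
    rintro ⟨X, hX⟩
    by_cases htX : t ∈ X <;> simp [htX, insert_erase]

end Finset

section Idempotents

variable {R : Type*} [Ring R]

/-- Equivalently, left multiplication by `x` preserves the right ideal `(1 - a) R`. -/
def Subring.absorbing {a : R} (ha : IsIdempotentElem a) : Subring R where
  carrier := {x | a * x * a = a * x}
  one_mem' := by simpa using ha.eq
  mul_mem' {x y} (hx : a * x * a = a * x) (hy : a * y * a = a * y) :=
    calc a * (x * y) * a = a * x * a * y * a := by rw [hx, mul_assoc a x y]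
      _ = a * x * (a * y * a) := by simp only [mul_assoc]
      _ = a * (x * y) := by rw [hy, ← mul_assoc, hx, mul_assoc]
  zero_mem' := by simp
  add_mem' {x y} (hx : a * x * a = a * x) (hy : a * y * a = a * y) :=
    show a * (x + y) * a = a * (x + y) by rw [mul_add, add_mul, hx, hy]
  neg_mem' {x} (hx : a * x * a = a * x) := show a * -x * a = a * -x by rw [mul_neg, neg_mul, hx]

theorem Subring.mem_absorbing {a : R} (ha : IsIdempotentElem a) {x : R} :
    x ∈ Subring.absorbing ha ↔ a * x * a = a * x := Iff.rfl

theorem CompleteOrthogonalIdempotents.sumElim_mul_one_sub {I : Type*} [Fintype I] {e : I → R}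
    (he : CompleteOrthogonalIdempotents e) {a : R} (ha : IsIdempotentElem a)
    (hea : ∀ i, a * e i * a = a * e i) :
    CompleteOrthogonalIdempotents (Sum.elim (fun i => a * e i) (fun i => e i * (1 - a))) := by
  have hcorner : ∀ i, a * e i * (1 - a) = 0 := fun i => by rw [mul_sub, mul_one, hea, sub_self]
  have hinl_inr : ∀ i j, a * e i * (e j * (1 - a)) = 0 := by
    intro i j
    obtain rfl | hij := eq_or_ne i j
    · rw [← mul_assoc, mul_assoc a, (he.idem i).eq, hcorner]
    · rw [mul_assoc, ← mul_assoc (e i), he.ortho hij, zero_mul, mul_zero]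
  refine CompleteOrthogonalIdempotents.iff_ortho_complete.2 ⟨?_, ?_⟩
  · rintro (i | i) (j | j) hij
    · have hij : i ≠ j := fun h => hij (congrArg _ h)
      calc a * e i * (a * e j) = a * e i * a * e j := by simp only [mul_assoc]
        _ = 0 := by rw [hea, mul_assoc, he.ortho hij, mul_zero]
    · exact hinl_inr i j
    · calc e i * (1 - a) * (a * e j) = e i * ((1 - a) * a) * e j := by simp only [mul_assoc]
        _ = 0 := by rw [sub_mul, one_mul, ha.eq, sub_self, mul_zero, zero_mul]
    · have hij : i ≠ j := fun h => hij (congrArg _ h)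
      calc e i * (1 - a) * (e j * (1 - a))
          = e i * e j * (1 - a) - e i * (a * e j * (1 - a)) := by noncomm_ring
        _ = 0 := by rw [he.ortho hij, hcorner, zero_mul, mul_zero, sub_zero]
  · rw [Fintype.sum_sum_type]
    simp only [Sum.elim_inl, Sum.elim_inr]
    rw [← Finset.mul_sum, ← Finset.sum_mul, he.complete]
    noncomm_ring

section KiselmanIdempotent

variable {ι : Type*} [LinearOrder ι] (a : ι → R)

def kiselmanIdempotent (s X : Finset ι) : R :=
  ((X.sort (· ≤ ·)).reverse.map a).prod * (((s \ X).sort (· ≤ ·)).map fun j => 1 - a j).prod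

variable {a}

theorem kiselmanIdempotent_empty : kiselmanIdempotent a ∅ ∅ = 1 := by
  simp [kiselmanIdempotent]

theorem kiselmanIdempotent_insert_of_subset {t : ι} {s X : Finset ι} (hs : ∀ i ∈ s, i < t)
    (hX : X ⊆ s) : kiselmanIdempotent a (insert t s) X = kiselmanIdempotent a s X * (1 - a t) := by
  have htX : t ∉ X := fun h => lt_irrefl t (hs t (hX h))
  have ht : t ∉ s \ X := fun h => lt_irrefl t (hs t (Finset.mem_sdiff.1 h).1)
  rw [kiselmanIdempotent, kiselmanIdempotent, Finset.insert_sdiff_of_notMem _ htX,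
    Finset.sort_insert_of_forall_le (fun i hi => (hs i (Finset.mem_sdiff.1 hi).1).le) ht,
    List.map_append, List.prod_append, List.map_singleton, List.prod_singleton, mul_assoc]

theorem kiselmanIdempotent_insert_insert {t : ι} {s X : Finset ι} (hs : ∀ i ∈ s, i < t)
    (hX : X ⊆ s) :
    kiselmanIdempotent a (insert t s) (insert t X) = a t * kiselmanIdempotent a s X := by
  have ht : t ∉ s := fun h => lt_irrefl t (hs t h)
  rw [kiselmanIdempotent, kiselmanIdempotent, Finset.insert_sdiff_insert,
    Finset.sdiff_insert_of_notMem ht,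
    Finset.sort_insert_of_forall_le (fun i hi => (hs i (hX hi)).le) (fun h => ht (hX h)),
    List.reverse_append, List.reverse_singleton, List.singleton_append, List.map_cons,
    List.prod_cons, mul_assoc]

theorem kiselmanIdempotent_mem_closure {s X : Finset ι} (hX : X ⊆ s) :
    kiselmanIdempotent a s X ∈ Subring.closure (a '' s) := by
  refine mul_mem (Subring.list_prod_mem _ ?_) (Subring.list_prod_mem _ ?_) <;>
    simp only [List.mem_map, Finset.mem_sort, List.mem_reverse] <;>
    rintro _ ⟨i, hi, rfl⟩
  · exact Subring.subset_closure ⟨i, hX hi, rfl⟩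
  · exact sub_mem (one_mem _) (Subring.subset_closure ⟨i, (Finset.mem_sdiff.1 hi).1, rfl⟩)

theorem completeOrthogonalIdempotents_kiselmanIdempotent (ha : ∀ i, IsIdempotentElem (a i))
    (hrel : ∀ ⦃i j⦄, i < j → a j * a i * a j = a j * a i) (s : Finset ι) :
    CompleteOrthogonalIdempotents fun X : s.powerset => kiselmanIdempotent a s X := by
  induction s using Finset.induction_on_max with
  | empty =>
    refine CompleteOrthogonalIdempotents.iff_ortho_complete.2 ⟨?_, ?_⟩
    · intro X Y hXY
      have hempty : ∀ X : (∅ : Finset ι).powerset, (X : Finset ι) = ∅ :=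
        fun X => Finset.subset_empty.1 (Finset.mem_powerset.1 X.2)
      exact absurd (Subtype.ext ((hempty X).trans (hempty Y).symm)) hXY
    · rw [Finset.sum_coe_sort (∅ : Finset ι).powerset (kiselmanIdempotent a ∅),
        Finset.powerset_empty, Finset.sum_singleton, kiselmanIdempotent_empty]
  | insert t s hs ih =>
    have ht : t ∉ s := fun h => lt_irrefl t (hs t h)
    have habsorb : ∀ X : s.powerset,
        a t * kiselmanIdempotent a s X * a t = a t * kiselmanIdempotent a s X := by
      refine fun X => (Subring.mem_absorbing (ha t)).1 (Subring.closure_le.2 ?_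
        (kiselmanIdempotent_mem_closure (Finset.mem_powerset.1 X.2)))
      rintro _ ⟨i, hi, rfl⟩
      exact hrel (hs i hi)
    rw [← CompleteOrthogonalIdempotents.equiv (Finset.powersetInsertEquiv ht)]
    convert ih.sumElim_mul_one_sub (ha t) habsorb using 1
    funext X
    rcases X with ⟨X, hX⟩ | ⟨X, hX⟩
    · exact kiselmanIdempotent_insert_insert hs (Finset.mem_powerset.1 hX)
    · exact kiselmanIdempotent_insert_of_subset hs (Finset.mem_powerset.1 hX)

end KiselmanIdempotent

end Idempotents

section Kiselman

variable {n : ℕ}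

theorem kmk_ofList (l : List (Fin n)) : kmk n (FreeMonoid.ofList l) = (l.map ka).prod := by
  induction l with
  | nil => exact map_one _
  | cons i l ih => rw [FreeMonoid.ofList_cons, map_mul, ih, List.map_cons, List.prod_cons]; rfl

theorem isIdempotentElem_ka (i : Fin n) : IsIdempotentElem (ka i) :=
  PresentedMonoid.mk_eq_mk_of_rel (KisRel.idem i)

theorem ka_mul_ka_mul_ka_of_lt {i j : Fin n} (h : i < j) : ka j * ka i * ka j = ka j * ka i :=
  PresentedMonoid.mk_eq_mk_of_rel (KisRel.braid₂ h)

theorem EXA_eq_kiselmanIdempotent (K : Type*) [Field K] (X : Finset (Fin n)) :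
    EXA n K X = kiselmanIdempotent (fun i => MonoidAlgebra.of K (Kiselman n) (ka i)) .univ X := by
  rw [EXA, eX, kmk_ofList, map_list_prod, List.map_map, kiselmanIdempotent,
    Finset.compl_eq_univ_sdiff]
  rfl

end Kiselman

/-- Proposition 42: the `e_X^{(n)}` are pairwise orthogonal idempotents of `K[K_n]`
summing to the identity. -/
theorem kiselman_primitive_idempotents (n : ℕ) (K : Type*) [Field K] :
    (∀ X : Finset (Fin n), EXA n K X * EXA n K X = EXA n K X) ∧
    (∀ X Y : Finset (Fin n), X ≠ Y → EXA n K X * EXA n K Y = 0) ∧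
    (∑ X : Finset (Fin n), EXA n K X = 1) := by
  have h := completeOrthogonalIdempotents_kiselmanIdempotent
    (fun i => (isIdempotentElem_ka i).map (MonoidAlgebra.of K (Kiselman n)))
    (fun i j hij => by simp only [← map_mul, ka_mul_ka_mul_ka_of_lt hij]) Finset.univ
  rw [← CompleteOrthogonalIdempotents.equiv
    (Equiv.subtypeUnivEquiv fun X => Finset.mem_powerset.2 (Finset.subset_univ X)).symm] at h
  simp only [← EXA_eq_kiselmanIdempotent] at h
  exact ⟨fun X => (h.idem X).eq, fun X Y hXY => h.ortho hXY, h.complete⟩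
end
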